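/- If for every k ≥ 0 there exist n ≥ k and α ∈ Γ with (n,α) ∈ 𝒯 (that is, sup({n : (n,α) ∈ 𝒯 for some α ∈ Γ} ∪ {0}) = +∞), then for every m ≥ 1 there exist m injective σ_{φ,𝔴}-orbits in F^Γ with pairwise disjoint ranges; hence 𝗈(σ_{φ,𝔴}) = +∞. -/
import Mathlib


open Function Set

/-- The weighted generalized shift `σ_{φ,𝔴} : F^Γ → F^Γ`,
`σ_{φ,𝔴}((x_α)_α) = (𝔴_α x_{φ(α)})_α`. The unweighted shift `σ_φ` is `wshift φ 1`. -/
def wshift {F : Type*} [Field F] {Γ : Type*} (φ : Γ → Γ) (w : Γ → F) :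
    (Γ → F) → (Γ → F) :=
  fun x α => w α * x (φ α)
/-- `(n, α) ∈ 𝒯` iff `{φ^i(α) : 0 ≤ i ≤ n}` is an `(n+1)`-set and `∏_{0≤i≤n} 𝔴_{φ^i(α)} ≠ 0`. -/
def Tset {F : Type*} [Field F] {Γ : Type*} (φ : Γ → Γ) (w : Γ → F) (n : ℕ) (α : Γ) : Prop :=
  ((fun i : ℕ => φ^[i] α) '' Set.Iic n).ncard = n + 1 ∧
    ∏ i ∈ Finset.range (n + 1), w (φ^[i] α) ≠ 0
/-- An `f`-orbit: a sequence with `f (a n) = a (n+1)` for all `n`. -/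
def IsOrbit {A : Type*} (f : A → A) (a : ℕ → A) : Prop := ∀ n : ℕ, f (a n) = a (n + 1)

/-- There exist `m` injective `f`-orbits with pairwise disjoint ranges. -/
def HasDisjointOrbits {A : Type*} (f : A → A) (m : ℕ) : Prop :=
  ∃ a : Fin m → ℕ → A, (∀ i, IsOrbit f (a i) ∧ Function.Injective (a i)) ∧
    ∀ i j, i ≠ j → Disjoint (Set.range (a i)) (Set.range (a j))

/-- The infinite orbit number `𝗈(f) ∈ ℕ ∪ {+∞}`. -/
noncomputable def orbitNumber {A : Type*} (f : A → A) : ℕ∞ :=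
  sSup ({0} ∪ {m : ℕ∞ | ∃ k : ℕ, m = (k : ℕ∞) ∧ 1 ≤ k ∧ HasDisjointOrbits f k})

/-- Covariant set-theoretical entropy: `ent_set f = 𝗈(f)`. -/
noncomputable def entSet {A : Type*} (f : A → A) : ℕ∞ := orbitNumber f

section Aux
variable {F : Type*} [Field F] {Γ : Type*} (φ : Γ → Γ) (w : Γ → F)

def GoodChain (α : Γ) (L : ℕ) : Prop :=
  Set.InjOn (fun i : ℕ => φ^[i] α) (Set.Iic L) ∧ ∀ i ≤ L, w (φ^[i] α) ≠ 0

lemma tset_goodChain {n : ℕ} {α : Γ} (h : Tset φ w n α) : GoodChain φ w α n := by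
  classical
  obtain ⟨h1, h2⟩ := h
  constructor
  · have hcoe : (fun i : ℕ => φ^[i] α) '' Set.Iic n
        = ↑((Finset.Iic n).image (fun i : ℕ => φ^[i] α)) := by
      rw [Finset.coe_image, Finset.coe_Iic]
    rw [hcoe, Set.ncard_coe_finset] at h1
    have := Finset.card_image_iff.mp (by rw [h1, Nat.card_Iic])
    simpa [Finset.coe_Iic] using this
  · intro i hi hzero
    exact h2 (Finset.prod_eq_zero (Finset.mem_range.mpr (Nat.lt_succ_of_le hi)) hzero)

lemma GoodChain.sub {α : Γ} {n a L : ℕ} (h : GoodChain φ w α n) (hL : a + L ≤ n) :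
    GoodChain φ w (φ^[a] α) L := by
  constructor
  · intro i hi j hj hij
    simp only [Set.mem_Iic] at hi hj
    simp only [← Function.iterate_add_apply] at hij
    have := h.1 (Set.mem_Iic.mpr (by omega : i + a ≤ n))
      (Set.mem_Iic.mpr (by omega : j + a ≤ n)) hij
    omega
  · intro i hi
    rw [← Function.iterate_add_apply]
    exact h.2 (i + a) (by omega)

lemma goodChain_avoid {α : Γ} {n L : ℕ} (h : GoodChain φ w α n) (T : Finset Γ)
    (hn : (T.card + 1) * (L + 1) ≤ n + 1) :
    ∃ a, a + L ≤ n ∧ ∀ i ≤ L, φ^[a + i] α ∉ T := by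
  by_contra hc
  push_neg at hc
  have hwin : ∀ s : ℕ, s ≤ T.card → s * (L + 1) + L ≤ n := by
    intro s hs
    have : (s + 1) * (L + 1) ≤ (T.card + 1) * (L + 1) :=
      Nat.mul_le_mul_right _ (by omega)
    nlinarith
  have hc' : ∀ s : ℕ, ∃ i, s ≤ T.card → (i ≤ L ∧ φ^[s * (L + 1) + i] α ∈ T) := by
    intro s
    by_cases hs : s ≤ T.card
    · obtain ⟨i, h1, h2⟩ := hc (s * (L + 1)) (hwin s hs)
      exact ⟨i, fun _ => ⟨h1, h2⟩⟩
    · exact ⟨0, fun h' => absurd h' hs⟩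
  choose idx hidx using hc'
  have hmaps : ∀ s ∈ Finset.range (T.card + 1),
      φ^[s * (L + 1) + idx s] α ∈ T := by
    intro s hs
    exact (hidx s (by simpa using Nat.lt_succ_iff.mp (Finset.mem_range.mp hs))).2
  have hinj : Set.InjOn (fun s => φ^[s * (L + 1) + idx s] α)
      ↑(Finset.range (T.card + 1)) := by
    intro s hs s' hs' heq
    simp only [Finset.coe_range, Set.mem_Iio] at hs hs'
    have hsle : s ≤ T.card := by omega
    have hsle' : s' ≤ T.card := by omega
    have hi := (hidx s hsle).1
    have hi' := (hidx s' hsle').1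
    have he : s * (L + 1) + idx s = s' * (L + 1) + idx s' := by
      have := h.1 (Set.mem_Iic.mpr (by have := hwin s hsle; omega))
        (Set.mem_Iic.mpr (by have := hwin s' hsle'; omega)) heq
      exact this
    rcases Nat.lt_trichotomy s s' with hlt | heq' | hlt
    · exfalso
      have : (s + 1) * (L + 1) ≤ s' * (L + 1) := Nat.mul_le_mul_right _ (by omega)
      nlinarith
    · exact heq'
    · exfalso
      have : (s' + 1) * (L + 1) ≤ s * (L + 1) := Nat.mul_le_mul_right _ (by omega)
      nlinarith
  have := Finset.card_le_card_of_injOn _ hmaps hinj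
  simp [Finset.card_range] at this

lemma exists_chain_avoid (h : ∀ k : ℕ, ∃ n, k ≤ n ∧ ∃ α, Tset φ w n α)
    (T : Finset Γ) (L : ℕ) :
    ∃ β, GoodChain φ w β L ∧ ∀ i ≤ L, φ^[i] β ∉ T := by
  obtain ⟨n, hn, α, hα⟩ := h ((T.card + 1) * (L + 1))
  have hg := tset_goodChain φ w hα
  obtain ⟨a, ha, havoid⟩ := goodChain_avoid (L := L) φ w hg T (by omega)
  refine ⟨φ^[a] α, GoodChain.sub φ w hg ha, ?_⟩
  intro i hiL
  have heq : φ^[i] (φ^[a] α) = φ^[a + i] α := by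
    rw [← Function.iterate_add_apply, Nat.add_comm]
  rw [heq]
  exact havoid i hiL

lemma wshift_iterate (k : ℕ) (x : Γ → F) (γ : Γ) :
    (wshift φ w)^[k] x γ = (∏ t ∈ Finset.range k, w (φ^[t] γ)) * x (φ^[k] γ) := by
  induction k generalizing x with
  | zero => simp
  | succ k ih =>
    rw [Function.iterate_succ_apply, ih]
    rw [Finset.prod_range_succ]
    rw [Function.iterate_succ_apply' φ k γ]
    simp only [wshift]
    ring

end Aux

lemma exists_disjoint_seq {Γ : Type*} (pts : ℕ → Γ → Finset Γ) (Q : ℕ → Γ → Prop)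
    (H : ∀ (T : Finset Γ) (L : ℕ), ∃ β, Q L β ∧ Disjoint (pts L β) T) :
    ∃ β : ℕ → Γ, (∀ j, Q j (β j)) ∧
      ∀ j' j, j' < j → Disjoint (pts j (β j)) (pts j' (β j')) := by
  classical
  let g : ℕ → Finset Γ × Γ := fun n =>
    Nat.rec (⟨pts 0 (H ∅ 0).choose, (H ∅ 0).choose⟩)
      (fun j p => ⟨p.1 ∪ pts (j + 1) (H p.1 (j + 1)).choose, (H p.1 (j + 1)).choose⟩) n
  have hQ : ∀ j, Q j ((g j).2) := by
    intro j
    cases j with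
    | zero => exact (H ∅ 0).choose_spec.1
    | succ k => exact (H (g k).1 (k + 1)).choose_spec.1
  have hsub : ∀ j, pts j ((g j).2) ⊆ (g j).1 := by
    intro j
    cases j with
    | zero => exact subset_rfl
    | succ k => exact Finset.subset_union_right
  have hmono : ∀ j' j, j' ≤ j → (g j').1 ⊆ (g j).1 := by
    intro j' j hle
    induction hle with
    | refl => exact subset_rfl
    | step _ ih => exact ih.trans Finset.subset_union_left
  have hdisj : ∀ j, Disjoint (pts (j + 1) ((g (j + 1)).2)) ((g j).1) := by
    intro j
    exact (H (g j).1 (j + 1)).choose_spec.2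
  refine ⟨fun j => (g j).2, hQ, ?_⟩
  intro j' j hlt
  cases j with
  | zero => omega
  | succ k =>
    exact (hdisj k).mono_right (((hsub j').trans (hmono j' k (by omega))))


/-- If `sup({n : (n,α) ∈ 𝒯 for some α} ∪ {0}) = +∞`, then for every `m ≥ 1` there exist
`m` injective `σ_{φ,𝔴}`-orbits with pairwise disjoint ranges; hence `𝗈(σ_{φ,𝔴}) = +∞`. -/
theorem stmt_3 {F : Type*} [Field F] [Fintype F] {Γ : Type*} [Nonempty Γ]
    (φ : Γ → Γ) (w : Γ → F)
    (h : ∀ k : ℕ, ∃ n : ℕ, k ≤ n ∧ ∃ α : Γ, Tset φ w n α) :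
    (∀ m : ℕ, 1 ≤ m → HasDisjointOrbits (wshift φ w) m) ∧
      orbitNumber (wshift φ w) = ⊤ := by

  classical
  have H : ∀ (T : Finset Γ) (L : ℕ), ∃ β, GoodChain φ w β L ∧
      Disjoint ((Finset.range (L + 1)).image fun i => φ^[i] β) T := by
    intro T L
    obtain ⟨β, h1, h2⟩ := exists_chain_avoid φ w h T L
    refine ⟨β, h1, Finset.disjoint_left.mpr ?_⟩
    intro x hx
    simp only [Finset.mem_image, Finset.mem_range] at hx
    obtain ⟨i, hi, rfl⟩ := hx
    exact h2 i (by omega)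
  obtain ⟨β, hQ, hD⟩ := exists_disjoint_seq
    (fun L β => (Finset.range (L + 1)).image fun i => φ^[i] β) (fun L β => GoodChain φ w β L) H
  have hsep : ∀ j j', j ≠ j' → ∀ i i', i ≤ j → i' ≤ j' → φ^[i] (β j) ≠ φ^[i'] (β j') := by
    have base : ∀ j' j, j' < j → ∀ i i', i ≤ j → i' ≤ j' → φ^[i] (β j) ≠ φ^[i'] (β j') := by
      intro j' j hlt i i' hi hi' heq
      have h1 : φ^[i] (β j) ∈ (Finset.range (j + 1)).image fun i => φ^[i] (β j) :=
        Finset.mem_image.mpr ⟨i, Finset.mem_range.mpr (by omega), rfl⟩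
      have h2 : φ^[i] (β j) ∈ (Finset.range (j' + 1)).image fun i => φ^[i] (β j') :=
        Finset.mem_image.mpr ⟨i', Finset.mem_range.mpr (by omega), heq.symm⟩
      exact Finset.disjoint_left.mp (hD j' j hlt) h1 h2
    intro j j' hne i i' hi hi'
    rcases hne.lt_or_gt with hlt | hlt
    · exact fun e => (base j j' hlt i' i hi' hi) e.symm
    · exact base j' j hlt i i' hi hi'
  have main : ∀ m : ℕ, 1 ≤ m → HasDisjointOrbits (wshift φ w) m := by
    intro m hm
    set x : Fin m → Γ → F := fun i γ =>
      if ∃ j : ℕ, j % m = (i : ℕ) ∧ γ = φ^[j] (β j) then 1 else 0 with hx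
    set a : Fin m → ℕ → (Γ → F) := fun i k => (wshift φ w)^[k] (x i) with ha
    -- key nonzero lemma
    have key : ∀ (j k : ℕ), k ≤ j → ∀ i : Fin m, j % m = (i : ℕ) →
        a i k (φ^[j - k] (β j)) ≠ 0 := by
      intro j k hk i hji
      rw [ha]
      simp only
      rw [wshift_iterate]
      apply mul_ne_zero
      · rw [Finset.prod_ne_zero_iff]
        intro t ht
        rw [← Function.iterate_add_apply]
        exact (hQ j).2 (t + (j - k)) (by have := Finset.mem_range.mp ht; omega)
      · rw [← Function.iterate_add_apply]
        have he : k + (j - k) = j := by omega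
        rw [he, hx]
        simp only
        rw [if_pos ⟨j, hji, rfl⟩]
        exact one_ne_zero
    have zero : ∀ (j k l : ℕ) (i' : Fin m), k ≤ j → l ≤ k →
        ¬(l = k ∧ (i' : ℕ) = j % m) → a i' l (φ^[j - k] (β j)) = 0 := by
      intro j k l i' hk hl hnot
      rw [ha]
      simp only
      rw [wshift_iterate]
      have hxz : x i' (φ^[l] (φ^[j - k] (β j))) = 0 := by
        rw [← Function.iterate_add_apply, hx]
        simp only
        rw [if_neg]
        rintro ⟨j', hj', heq⟩
        by_cases hjj : j' = j
        · subst hjj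
          have := (hQ j').1 (Set.mem_Iic.mpr (by omega : l + (j' - k) ≤ j'))
            (Set.mem_Iic.mpr (le_refl j')) heq
          exact hnot ⟨by omega, by omega⟩
        · exact hsep j j' (fun e => hjj e.symm) (l + (j - k)) j' (by omega) (le_refl j') heq
      rw [hxz, mul_zero]
    have jmod : ∀ (i : Fin m) (k : ℕ), ((i : ℕ) + k * m) % m = (i : ℕ) ∧
        k ≤ (i : ℕ) + k * m := by
      intro i k
      constructor
      · rw [Nat.add_mul_mod_self_right]
        exact Nat.mod_eq_of_lt i.isLt
      · have : k * 1 ≤ k * m := Nat.mul_le_mul_left _ hm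
        omega
    have cross : ∀ (i i' : Fin m) (k l : ℕ), l ≤ k → ¬(l = k ∧ i' = i) →
        a i k ≠ a i' l := by
      intro i i' k l hl hnot heq
      obtain ⟨hmod, hge⟩ := jmod i k
      set j := (i : ℕ) + k * m
      have h1 := key j k hge i hmod
      have h0 := zero j k l i' hge hl (by
        rintro ⟨rfl, hcast⟩
        exact hnot ⟨rfl, Fin.ext (by rw [hcast, hmod])⟩)
      rw [heq] at h1
      exact h1 h0
    refine ⟨a, fun i => ⟨fun n => (Function.iterate_succ_apply' _ n _).symm, ?_⟩, ?_⟩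
    · intro k l heq
      by_contra hne
      rcases Nat.lt_or_ge k l with hlt | hge
      · exact cross i i l k (by omega) (fun ⟨e, _⟩ => hne e) heq.symm
      · exact cross i i k l (by omega) (fun ⟨e, _⟩ => hne e.symm) heq
    · intro i i' hne
      rw [Set.disjoint_left]
      rintro z ⟨k, rfl⟩ ⟨l, hl⟩
      rcases Nat.lt_or_ge k l with hlt | hge
      · exact cross i' i l k (by omega) (fun ⟨_, e⟩ => hne e) hl
      · exact cross i i' k l hge (fun ⟨_, e⟩ => hne e.symm) hl.symm
  refine ⟨main, ?_⟩
  rw [orbitNumber, sSup_eq_top]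
  intro b hb
  lift b to ℕ using hb.ne
  refine ⟨((b + 1 : ℕ) : ℕ∞), Or.inr ⟨b + 1, rfl, by omega, main (b + 1) (by omega)⟩, ?_⟩
  exact_mod_cast Nat.lt_succ_self b
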